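/- Let R, R_a > 0 and let r_v be a real number with r_v ≥ R_a and r_v − R < R_a, and let v be a point of the plane with ‖v‖ = r_v. For every t with max(r_v − R, 0) ≤ t ≤ R_a, the two-dimensional Lebesgue measure of the set {x ∈ ℝ² : ‖x‖ ≤ t and ‖x − v‖ ≤ R} equals ∫_{max(r_v−R,0)}^{t} w(r) dr, where w(r) = 2r·arccos((r_v² − R² + r²)/(2·r_v·r)) if r + r_v > R, and w(r) = 2πr if r + r_v ≤ R. (Equivalently, a point chosen uniformly in the intersection of the disk of radius R_a about the origin and the disk of radius R about v has distance from the origin with unnormalized density w(r).) -/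

import Mathlib

open Real MeasureTheory

/-- Unnormalized density of the distance from the origin of a point chosen
uniformly in the intersection of the attack disk with the neighborhood disk of
a node at distance `r_v` from the center of attack. -/
noncomputable def w (R rv r : ℝ) : ℝ :=
  if R < r + rv then 2 * r * Real.arccos ((rv ^ 2 - R ^ 2 + r ^ 2) / (2 * rv * r))
  else 2 * π * r

/-!
After an isometry moving `v` to the positive real axis, integrate the indicator of the lens
in polar coordinates. By the law of cosines, the circle of radius `r` meets the disk of
radius `R` about `r_v` in the arc `|θ| ≤ arccos ((r_v² - R² + r²) / (2 r_v r))`, so the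
slice at radius `r ≤ t` contributes `r · 2 arccos(…) = w r`; the `arccos` saturates at `π`
exactly when the circle lies inside that disk and at `0` when it misses it, which is why `w`
vanishes below `r_v - R`.
-/

open Set Metric

section Isometry

variable {E F : Type*} [NormedAddCommGroup E] [InnerProductSpace ℝ E]
  [NormedAddCommGroup F] [InnerProductSpace ℝ F]

theorem LinearIsometryEquiv.exists_apply_eq_of_norm_eq (Φ : E ≃ₗᵢ[ℝ] F) {v : E} {u : F}
    (h : ‖v‖ = ‖u‖) : ∃ Ψ : E ≃ₗᵢ[ℝ] F, Ψ v = u :=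
  ⟨Φ.trans (Submodule.reflection (ℝ ∙ (Φ v - u))ᗮ),
    Submodule.reflection_sub (by rwa [Φ.norm_map])⟩

variable [MeasurableSpace E] [BorelSpace E] [FiniteDimensional ℝ E]
  [MeasurableSpace F] [BorelSpace F] [FiniteDimensional ℝ F]

theorem LinearIsometryEquiv.volume_closedBall_zero_inter_closedBall (Ψ : E ≃ₗᵢ[ℝ] F) (v : E)
    (t R : ℝ) :
    volume (closedBall 0 t ∩ closedBall v R) =
      volume (closedBall 0 t ∩ closedBall (Ψ v) R) := by
  rw [← Ψ.measurePreserving.measure_preimage_emb Ψ.toHomeomorph.measurableEmbedding,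
    preimage_inter, Ψ.preimage_closedBall, Ψ.preimage_closedBall, map_zero,
    Ψ.symm_apply_apply]

end Isometry

theorem le_cos_iff_abs_le_arccos {c θ : ℝ} (hc : c ≤ 1) (hθ : |θ| ≤ π) :
    c ≤ cos θ ↔ |θ| ≤ arccos c := by
  rw [← cos_abs]
  constructor
  · intro h
    calc |θ| = arccos (cos |θ|) := (arccos_cos (abs_nonneg θ) hθ).symm
      _ ≤ arccos c := antitone_arccos h
  · intro h
    rcases lt_or_ge c (-1) with hc' | hc'
    · linarith [neg_one_le_cos |θ|]
    · calc c = cos (arccos c) := (cos_arccos hc' hc).symm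
        _ ≤ cos |θ| := cos_le_cos_of_nonneg_of_le_pi (abs_nonneg θ) (arccos_le_pi c) h

theorem volume_setOf_le_cos (c : ℝ) :
    volume {θ ∈ Ioo (-π) π | c ≤ cos θ} = ENNReal.ofReal (2 * arccos c) := by
  rcases lt_or_ge 1 c with hc | hc
  · have hempty : {θ ∈ Ioo (-π) π | c ≤ cos θ} = ∅ :=
      eq_empty_of_forall_notMem fun θ hθ => by linarith [hθ.2, cos_le_one θ]
    rw [hempty, arccos_of_one_le hc.le, mul_zero, ENNReal.ofReal_zero, measure_empty]
  set a := arccos c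
  have hslice : {θ ∈ Ioo (-π) π | c ≤ cos θ} = Ioo (-π) π ∩ Icc (-a) a := by
    ext θ
    simp only [mem_ofPred_eq, mem_inter_iff, mem_Icc, ← abs_le]
    exact and_congr_right fun hθ => le_cos_iff_abs_le_arccos hc (abs_lt.2 hθ).le
  have hIoo : Ioo (-a) a ⊆ Ioo (-π) π ∩ Icc (-a) a :=
    subset_inter (Ioo_subset_Ioo (neg_le_neg (arccos_le_pi c)) (arccos_le_pi c))
      Ioo_subset_Icc_self
  rw [hslice]
  refine le_antisymm ?_ ?_
  · calc volume (Ioo (-π) π ∩ Icc (-a) a)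
      _ ≤ volume (Icc (-a) a) := measure_mono inter_subset_right
      _ = ENNReal.ofReal (2 * a) := by rw [Real.volume_Icc]; ring_nf
  · calc ENNReal.ofReal (2 * a) = volume (Ioo (-a) a) := by rw [Real.volume_Ioo]; ring_nf
      _ ≤ _ := measure_mono hIoo

theorem Complex.measurable_polarCoord_symm :
    Measurable fun p : ℝ × ℝ => Complex.polarCoord.symm p := by
  simp only [Complex.polarCoord_symm_apply]
  fun_prop

theorem Complex.volume_eq_lintegral_polarCoord {S : Set ℂ} (hS : MeasurableSet S) :
    volume S = ∫⁻ r in Ioi 0,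
      ENNReal.ofReal r * volume {θ ∈ Ioo (-π) π | Complex.polarCoord.symm (r, θ) ∈ S} := by
  have hmeas : Measurable fun p : ℝ × ℝ =>
      S.indicator (1 : ℂ → ENNReal) (Complex.polarCoord.symm p) :=
    (measurable_one.indicator hS).comp Complex.measurable_polarCoord_symm
  calc volume S = ∫⁻ z, S.indicator 1 z := (lintegral_indicator_one hS).symm
    _ = ∫⁻ p in Ioi 0 ×ˢ Ioo (-π) π,
          ENNReal.ofReal p.1 * S.indicator 1 (Complex.polarCoord.symm p) :=
      (Complex.lintegral_comp_polarCoord_symm _).symm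
    _ = ∫⁻ r in Ioi 0, ∫⁻ θ in Ioo (-π) π,
          ENNReal.ofReal r * S.indicator 1 (Complex.polarCoord.symm (r, θ)) := by
      rw [Measure.volume_eq_prod, ← Measure.prod_restrict, lintegral_prod _ (by fun_prop)]
    _ = _ := by
      refine setLIntegral_congr_fun measurableSet_Ioi fun r _ => ?_
      have hslice : MeasurableSet ((fun θ => Complex.polarCoord.symm (r, θ)) ⁻¹' S) :=
        hS.preimage (Complex.measurable_polarCoord_symm.comp measurable_prodMk_left)
      rw [lintegral_const_mul' _ _ ENNReal.ofReal_ne_top]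
      simp_rw [← indicator_comp_right (fun θ => Complex.polarCoord.symm (r, θ))]
      rw [Pi.one_comp, lintegral_indicator_one hslice, Measure.restrict_apply hslice, inter_comm]
      rfl

theorem Complex.norm_polarCoord_symm_sub_ofReal_sq (r θ s : ℝ) :
    ‖Complex.polarCoord.symm (r, θ) - s‖ ^ 2 = r ^ 2 - 2 * r * s * Real.cos θ + s ^ 2 := by
  rw [Complex.sq_norm, Complex.normSq_apply]
  simp only [Complex.polarCoord_symm_apply, Complex.sub_re, Complex.sub_im, Complex.mul_re,
    Complex.mul_im, Complex.add_re, Complex.add_im, Complex.ofReal_re, Complex.ofReal_im,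
    Complex.I_re, Complex.I_im]
  linear_combination r ^ 2 * Real.sin_sq_add_cos_sq θ

theorem Complex.norm_polarCoord_symm_sub_ofReal_le_iff {r θ s R : ℝ} (hr : 0 < r) (hs : 0 < s)
    (hR : 0 ≤ R) :
    ‖Complex.polarCoord.symm (r, θ) - s‖ ≤ R ↔
      (s ^ 2 - R ^ 2 + r ^ 2) / (2 * s * r) ≤ Real.cos θ := by
  rw [← sq_le_sq₀ (norm_nonneg _) hR, Complex.norm_polarCoord_symm_sub_ofReal_sq,
    div_le_iff₀ (by positivity)]
  constructor <;> intro h <;> linarith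

theorem w_eq_two_mul_arccos {R rv r : ℝ} (hrv : 0 < rv) (hr : 0 < r) :
    w R rv r = 2 * r * arccos ((rv ^ 2 - R ^ 2 + r ^ 2) / (2 * rv * r)) := by
  rw [w, ite_eq_left_iff, not_lt]
  intro h
  rw [arccos_of_le_neg_one, mul_right_comm]
  rw [div_le_iff₀ (by positivity)]
  nlinarith [mul_pos hrv hr]

theorem w_nonneg (R rv : ℝ) {r : ℝ} (hr : 0 ≤ r) : 0 ≤ w R rv r := by
  unfold w
  split_ifs
  · exact mul_nonneg (by positivity) (arccos_nonneg _)
  · positivity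

theorem w_eq_zero_of_le_sub {R rv r : ℝ} (hR : 0 ≤ R) (hr : 0 < r) (h : r ≤ rv - R) :
    w R rv r = 0 := by
  rw [w_eq_two_mul_arccos (by linarith) hr, arccos_of_one_le, mul_zero]
  rw [le_div_iff₀ (by nlinarith)]
  nlinarith

theorem measurable_w (R rv : ℝ) : Measurable (w R rv) :=
  Measurable.ite (measurableSet_lt measurable_const (by fun_prop)) (by fun_prop) (by fun_prop)

theorem ofReal_mul_volume_slice_closedBall_zero_inter_closedBall {R rv t r : ℝ} (hR : 0 ≤ R)
    (hrv : 0 < rv) (hr : 0 < r) :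
    ENNReal.ofReal r * volume {θ ∈ Ioo (-π) π |
        Complex.polarCoord.symm (r, θ) ∈ closedBall 0 t ∩ closedBall (rv : ℂ) R} =
      (Iic t).indicator (fun r => ENNReal.ofReal (w R rv r)) r := by
  simp only [mem_inter_iff, mem_closedBall_iff_norm, sub_zero,
    Complex.norm_polarCoord_symm, abs_of_pos hr,
    Complex.norm_polarCoord_symm_sub_ofReal_le_iff hr hrv hR]
  by_cases hrt : r ≤ t
  · simp only [hrt, true_and, indicator_of_mem (mem_Iic.2 hrt), volume_setOf_le_cos,
      w_eq_two_mul_arccos hrv hr, ← ENNReal.ofReal_mul hr.le]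
    ring_nf
  · simp [hrt]

theorem volume_closedBall_zero_inter_closedBall_eq_lintegral_w {R rv : ℝ} (hR : 0 ≤ R)
    (hrv : 0 < rv) (t : ℝ) :
    volume (closedBall 0 t ∩ closedBall (rv : ℂ) R) =
      ∫⁻ r in Ioc 0 t, ENNReal.ofReal (w R rv r) := by
  have hS : MeasurableSet (closedBall 0 t ∩ closedBall (rv : ℂ) R) :=
    measurableSet_closedBall.inter measurableSet_closedBall
  rw [Complex.volume_eq_lintegral_polarCoord hS,
    setLIntegral_congr_fun measurableSet_Ioi fun r hr =>
      ofReal_mul_volume_slice_closedBall_zero_inter_closedBall hR hrv hr,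
    setLIntegral_indicator measurableSet_Iic, Iic_inter_Ioi]

theorem intersection_area_as_integral_general (R Ra rv : ℝ) (hR : 0 < R) (hRa : 0 < Ra)
    (h₁ : Ra ≤ rv) (v : EuclideanSpace ℝ (Fin 2)) (hv : ‖v‖ = rv) :
    ∀ t : ℝ, max (rv - R) 0 ≤ t → t ≤ Ra →
      (volume {x : EuclideanSpace ℝ (Fin 2) | ‖x‖ ≤ t ∧ ‖x - v‖ ≤ R}).toReal =
        ∫ r in (max (rv - R) 0)..t, w R rv r := by
  rintro t hmt -
  have hrv : 0 < rv := hRa.trans_le h₁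
  obtain ⟨Ψ, hΨ⟩ := Complex.orthonormalBasisOneI.repr.symm.exists_apply_eq_of_norm_eq
    (u := (rv : ℂ)) (by rw [hv, Complex.norm_real, norm_of_nonneg hrv.le])
  have hlens : {x : EuclideanSpace ℝ (Fin 2) | ‖x‖ ≤ t ∧ ‖x - v‖ ≤ R} =
      closedBall 0 t ∩ closedBall v R := by
    ext x
    simp only [mem_ofPred_eq, mem_inter_iff, mem_closedBall_iff_norm, sub_zero]
  have hw_nonneg : 0 ≤ᵐ[volume.restrict (Ioc 0 t)] w R rv :=
    (ae_restrict_iff' measurableSet_Ioc).2 (ae_of_all _ fun r hr => w_nonneg R rv hr.1.le)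
  rw [hlens, Ψ.volume_closedBall_zero_inter_closedBall, hΨ,
    volume_closedBall_zero_inter_closedBall_eq_lintegral_w hR.le hrv,
    ← integral_eq_lintegral_of_nonneg_ae hw_nonneg (measurable_w R rv).aestronglyMeasurable,
    intervalIntegral.integral_of_le hmt]
  refine setIntegral_eq_of_subset_of_forall_sdiff_eq_zero measurableSet_Ioc
    (Ioc_subset_Ioc_left (le_max_right _ _)) fun r ⟨⟨hr0, hrt⟩, hrm⟩ =>
      w_eq_zero_of_le_sub hR.le hr0 ?_
  have hr_le_max : r ≤ max (rv - R) 0 := not_lt.1 fun h => hrm ⟨h, hrt⟩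
  exact (le_max_iff.1 hr_le_max).resolve_right hr0.not_ge

theorem intersection_area_as_integral (R Ra rv : ℝ) (hR : 0 < R) (hRa : 0 < Ra)
    (h₁ : Ra ≤ rv) (h₂ : rv - R < Ra) (v : EuclideanSpace ℝ (Fin 2)) (hv : ‖v‖ = rv) :
    ∀ t : ℝ, max (rv - R) 0 ≤ t → t ≤ Ra →
      (volume {x : EuclideanSpace ℝ (Fin 2) | ‖x‖ ≤ t ∧ ‖x - v‖ ≤ R}).toReal =
        ∫ r in (max (rv - R) 0)..t, w R rv r :=
  intersection_area_as_integral_general R Ra rv hR hRa h₁ v hv
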